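/- Let G be a bipartite graph with equipartition X ∪ Y, |X| = |Y|, and let U ⊆ X be a deficient set. Writing Y₀, Y₁, Y₂ for the vertices of Y with zero, exactly one, and at least two neighbors in U respectively, and X₁ for the vertices of U with a neighbor in Y₁, if U is minimally deficient then |X₁| = |Y₁| and 2|X − U| + |X₁| < 2(|Y₀| + |Y₁|). -/

import Mathlib

/-- Number of neighbours in `U` of the vertex `y`, for the bipartite graph with
parts `α`, `β` given by the relation `R`. -/
noncomputable def nbrIn {α β : Type*} (R : α → β → Prop) (U : Set α) (y : β) : ℕ :=
  {x | x ∈ U ∧ R x y}.ncard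

/-- `|N^(2)(U)|`: each neighbour of `U` is counted with multiplicity
`min 2 (number of its neighbours in U)`. -/
noncomputable def N2 {α β : Type*} [Fintype β] (R : α → β → Prop) (U : Set α) : ℕ :=
  ∑ y : β, min 2 (nbrIn R U y)

/-- `U` is a deficient set: `|N^(2)(U)| < 2|U|`. -/
def Deficient {α β : Type*} [Fintype β] (R : α → β → Prop) (U : Set α) : Prop :=
  N2 R U < 2 * U.ncard

/-- `U` is a minimal deficient set. -/
def MinimalDeficient {α β : Type*} [Fintype β] (R : α → β → Prop) (U : Set α) : Prop :=
  Deficient R U ∧ ∀ W ⊂ U, ¬ Deficient R W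

/-- Degree of a vertex `x ∈ α` in the bipartite graph `R`. -/
noncomputable def degX {α β : Type*} (R : α → β → Prop) (x : α) : ℕ := {y | R x y}.ncard

/-- Degree of a vertex `y ∈ β` in the bipartite graph `R`. -/
noncomputable def degY {α β : Type*} (R : α → β → Prop) (y : β) : ℕ := {x | R x y}.ncard

/-- The bipartite graph `R` has a 2-factor: a spanning subgraph in which every
vertex has degree exactly `2`. -/
def HasBipTwoFactor {α β : Type*} (R : α → β → Prop) : Prop :=
  ∃ H : α → β → Prop, (∀ x y, H x y → R x y) ∧
    (∀ x, {y | H x y}.ncard = 2) ∧ (∀ y, {x | H x y}.ncard = 2)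

/-! Deleting a vertex `x` from `U` lowers `2|U|` by exactly `2` and `|N^(2)(U)|` by at least the
number of vertices of `Y₁` whose unique neighbour in `U` is `x`. So, by minimality, every `x ∈ U`
is that unique neighbour for at most one vertex of `Y₁`, and sending `y ∈ Y₁` to its neighbour is a
bijection `Y₁ → X₁`. The inequality is then counting: `2|Y| = |N^(2)(U)| + 2|Y₀| + |Y₁|`,
`|N^(2)(U)| < 2|U|` and `|Y| = |X| = |U| + |X - U|`. -/

section

variable {α β : Type*}

theorem Set.ncard_setOf_eq_sum_ite [Fintype β] (p : β → Prop) [DecidablePred p] :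
    {y | p y}.ncard = ∑ y, if p y then 1 else 0 := by
  rw [Finset.sum_boole, Nat.cast_id, ← Set.ncard_coe_finset, Finset.coe_filter_univ]

theorem Set.ncard_le_ncard_of_forall_subsingleton [Finite α] [Finite β] (r : α → β → Prop)
    {s : Set α} {t : Set β} (hs : ∀ a ∈ s, ∃ b ∈ t, r a b)
    (ht : ∀ b ∈ t, {a ∈ s | r a b}.Subsingleton) : s.ncard ≤ t.ncard := by
  obtain ⟨s, rfl⟩ := s.toFinite.exists_finset_coe
  obtain ⟨t, rfl⟩ := t.toFinite.exists_finset_coe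
  simp only [Set.ncard_coe_finset]
  exact Finset.card_le_card_of_forall_subsingleton r hs ht

section

variable [Finite α] (R : α → β → Prop) {U W : Set α} {x : α}

theorem nbrIn_mono (h : W ⊆ U) (y : β) : nbrIn R W y ≤ nbrIn R U y :=
  Set.ncard_le_ncard (fun _ hx ↦ ⟨h hx.1, hx.2⟩)

theorem nbrIn_sdiff_singleton_add_one {y : β} (hx : x ∈ U) (hxy : R x y) :
    nbrIn R (U \ {x}) y + 1 = nbrIn R U y := by
  have hset : {x' | x' ∈ U \ {x} ∧ R x' y} = {x' | x' ∈ U ∧ R x' y} \ {x} := by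
    ext; simp only [Set.mem_sdiff, Set.mem_ofPred_eq]; tauto
  rw [nbrIn, hset, Set.ncard_sdiff_singleton_add_one (Set.mem_ofPred.2 ⟨hx, hxy⟩)]
  rfl

theorem N2_sdiff_singleton_add_ncard_le [Fintype β] (hx : x ∈ U) :
    N2 R (U \ {x}) + {y | nbrIn R U y = 1 ∧ R x y}.ncard ≤ N2 R U := by
  classical
  have hle : ∀ y, min 2 (nbrIn R (U \ {x}) y) + (if nbrIn R U y = 1 ∧ R x y then 1 else 0)
      ≤ min 2 (nbrIn R U y) := by
    intro y
    split_ifs with hy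
    · have hdrop := nbrIn_sdiff_singleton_add_one R hx hy.2
      omega
    · simpa using min_le_min_left 2 (nbrIn_mono R Set.sdiff_subset y)
  rw [Set.ncard_setOf_eq_sum_ite, N2, N2, ← Finset.sum_add_distrib]
  exact Finset.sum_le_sum fun y _ ↦ hle y

end

theorem N2_add_ncard_eq [Fintype β] (R : α → β → Prop) (U : Set α) :
    N2 R U + 2 * {y | nbrIn R U y = 0}.ncard + {y | nbrIn R U y = 1}.ncard
      = 2 * Fintype.card β := by
  have hpt : ∀ n : ℕ, min 2 n + 2 * (if n = 0 then 1 else 0) + (if n = 1 then 1 else 0) = 2 := by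
    intro n; rcases n with _ | _ | n <;> simp
  simp only [N2, Set.ncard_setOf_eq_sum_ite, Finset.mul_sum, ← Finset.sum_add_distrib, hpt]
  simp [mul_comm]

namespace MinimalDeficient

variable [Finite α] [Fintype β] {R : α → β → Prop} {U : Set α}

theorem subsingleton_setOf_nbrIn_eq_one (hU : MinimalDeficient R U) {x : α} (hx : x ∈ U) :
    {y | nbrIn R U y = 1 ∧ R x y}.Subsingleton := by
  rw [← Set.ncard_le_one_iff_subsingleton]
  by_contra! h
  refine hU.2 (U \ {x}) (Set.sdiff_singleton_ssubset.2 hx) ?_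
  have hdrop := N2_sdiff_singleton_add_ncard_le R hx
  have hcard := Set.ncard_sdiff_singleton_add_one hx U.toFinite
  have hdef := hU.1
  unfold Deficient at hdef ⊢
  omega

theorem ncard_setOf_nbrIn_eq_one_eq (hU : MinimalDeficient R U) :
    {x | x ∈ U ∧ ∃ y, nbrIn R U y = 1 ∧ R x y}.ncard = {y | nbrIn R U y = 1}.ncard := by
  have hunique : ∀ y, nbrIn R U y = 1 → {x | x ∈ U ∧ R x y}.Subsingleton := fun y hy ↦
    Set.ncard_le_one_iff_subsingleton.1 hy.le
  apply le_antisymm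
  · refine Set.ncard_le_ncard_of_forall_subsingleton R (fun x hx ↦ hx.2) fun y hy ↦ ?_
    exact (hunique y hy).anti fun x hx ↦ ⟨hx.1.1, hx.2⟩
  · refine Set.ncard_le_ncard_of_forall_subsingleton (flip R) (fun y hy ↦ ?_) fun x hx ↦ ?_
    · obtain ⟨x, hxU, hxy⟩ := Set.nonempty_of_ncard_ne_zero (hy.trans_ne one_ne_zero)
      exact ⟨x, ⟨hxU, y, hy, hxy⟩, hxy⟩
    · exact (hU.subsingleton_setOf_nbrIn_eq_one hx.1).anti fun y hy ↦ hy

end MinimalDeficient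

end

/-- Computations from the proof of Lemma 4: if `U ⊆ X` is minimally deficient, with
`Y₀, Y₁` the vertices of `Y` having zero resp. exactly one neighbour in `U`, and `X₁`
the vertices of `U` with a neighbour in `Y₁`, then `|X₁| = |Y₁|` and
`2|X - U| + |X₁| < 2(|Y₀| + |Y₁|)`. -/
theorem minimalDeficient_counts {α β : Type*} [Fintype α] [Fintype β]
    (R : α → β → Prop) (hcard : Fintype.card α = Fintype.card β)
    (U : Set α) (hU : MinimalDeficient R U) :
    {x : α | x ∈ U ∧ ∃ y, nbrIn R U y = 1 ∧ R x y}.ncard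
        = {y : β | nbrIn R U y = 1}.ncard ∧
      2 * Uᶜ.ncard + {x : α | x ∈ U ∧ ∃ y, nbrIn R U y = 1 ∧ R x y}.ncard <
        2 * ({y : β | nbrIn R U y = 0}.ncard + {y : β | nbrIn R U y = 1}.ncard) := by
  have hX₁ := hU.ncard_setOf_nbrIn_eq_one_eq
  refine ⟨hX₁, ?_⟩
  have hsplit : U.ncard + Uᶜ.ncard = Fintype.card β := by
    rw [Set.ncard_add_ncard_compl, Nat.card_eq_fintype_card, hcard]
  have hN2 := N2_add_ncard_eq R U
  have hdef : N2 R U < 2 * U.ncard := hU.1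
  omega
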